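/- arXiv:2402.04413 — 6 statements merged into one kernel-verified Lean document; each statement's English description precedes it below -/
import Mathlib

section
/- Let S ≠ ℕ be a numerical semigroup and d a positive integer. The set of maximal elements of M_d(S) = {T numerical semigroup : T/d = S} with respect to inclusion is finite. -/
open scoped Pointwise

/-- A numerical semigroup: a submonoid of (ℕ,+) with finite complement. -/
def IsNumSgp (S : Set ℕ) : Prop :=
  0 ∈ S ∧ (∀ a ∈ S, ∀ b ∈ S, a + b ∈ S) ∧ (Sᶜ : Set ℕ).Finite

/-- The quotient T/d = {x ∈ ℕ : d·x ∈ T}. -/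
def quot (T : Set ℕ) (d : ℕ) : Set ℕ := {x | d * x ∈ T}

/-- Frobenius number: the largest natural number not in S (0 if S = ℕ). -/
noncomputable def Frob (S : Set ℕ) : ℕ := sSup (Sᶜ : Set ℕ)

/-- d·A = {d·a : a ∈ A}. -/
def dmul (d : ℕ) (A : Set ℕ) : Set ℕ := (fun a => d * a) '' A

/-- M_d(S): the set of numerical semigroups T with T/d = S. -/
def Md (S : Set ℕ) (d : ℕ) : Set (Set ℕ) := {T | IsNumSgp T ∧ quot T d = S}

/-- Pseudo-Frobenius numbers of T. -/
def PF (T : Set ℕ) : Set ℕ := {z | z ∉ T ∧ ∀ t ∈ T, t ≠ 0 → z + t ∈ T}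

/-- The minimal system of generators of a submonoid M of ℕ:
nonzero elements not expressible as a sum of two nonzero elements of M. -/
def msg (M : Set ℕ) : Set ℕ :=
  {x | x ∈ M ∧ x ≠ 0 ∧ ∀ a ∈ M, ∀ b ∈ M, a ≠ 0 → b ≠ 0 → a + b ≠ x}

/-- The submonoid of (ℕ,+) generated by X, as a set. -/
def gen (X : Set ℕ) : Set ℕ := (AddSubmonoid.closure X : AddSubmonoid ℕ)

/-- Irreducible: not an intersection of two numerical semigroups properly containing it. -/
def Irr (S : Set ℕ) : Prop :=
  ¬ ∃ A B : Set ℕ, IsNumSgp A ∧ IsNumSgp B ∧ S ⊂ A ∧ S ⊂ B ∧ S = A ∩ B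

/-- S viewed as a set of integers. -/
def NatSet (S : Set ℕ) : Set ℤ := {z | ∃ n ∈ S, (n : ℤ) = z}

/-- Symmetric: for every integer z ∉ S, F(S) − z ∈ S. -/
def SymNS (S : Set ℕ) : Prop :=
  ∀ z : ℤ, z ∉ NatSet S → (Frob S : ℤ) - z ∈ NatSet S

open Set

/-! Adding every integer beyond `d · F(S)` to a member `T` of `M_d(S)` keeps it in `M_d(S)`,
since `T/d` already contains everything beyond `F(S)`. So a maximal `T` contains `(d · F(S), ∞)`
and is determined by its trace on `[0, d · F(S)]`, which leaves finitely many possibilities. -/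

theorem IsNumSgp.mem_of_frob_lt {S : Set ℕ} (hS : IsNumSgp S) {y : ℕ} (hy : Frob S < y) :
    y ∈ S := by
  by_contra h
  exact (le_csSup hS.2.2.bddAbove h).not_gt hy

theorem IsNumSgp.union_Ioi {T : Set ℕ} (hT : IsNumSgp T) (N : ℕ) : IsNumSgp (T ∪ Ioi N) := by
  obtain ⟨h0, hadd, hfin⟩ := hT
  refine ⟨Or.inl h0, ?_, hfin.subset (compl_subset_compl.mpr subset_union_left)⟩
  rintro a (ha | ha) b (hb | hb)
  · exact Or.inl (hadd a ha b hb)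
  · exact Or.inr (Nat.lt_add_left a hb)
  all_goals exact Or.inr (Nat.lt_add_right b ha)

theorem quot_union_Ioi_mul {T : Set ℕ} {d N : ℕ} (h : Ioi N ⊆ quot T d) :
    quot (T ∪ Ioi (d * N)) d = quot T d := by
  refine Subset.antisymm (fun x hx => ?_) fun x hx => Or.inl hx
  rcases hx with hx | hx
  · exact hx
  · exact h (Nat.lt_of_mul_lt_mul_left hx)

theorem Ioi_mul_frob_subset_of_maximal {S T : Set ℕ} {d : ℕ} (hS : IsNumSgp S)
    (hT : T ∈ Md S d) (hmax : ∀ T' ∈ Md S d, T ⊆ T' → T' = T) : Ioi (d * Frob S) ⊆ T := by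
  have hquot : Ioi (Frob S) ⊆ quot T d := hT.2.symm ▸ fun _ => hS.mem_of_frob_lt
  have hmem : T ∪ Ioi (d * Frob S) ∈ Md S d :=
    ⟨hT.1.union_Ioi _, (quot_union_Ioi_mul hquot).trans hT.2⟩
  rw [← hmax _ hmem subset_union_left]
  exact subset_union_right

theorem Nat.finite_setOf_Ioi_subset (N : ℕ) : {T : Set ℕ | Ioi N ⊆ T}.Finite := by
  refine (((finite_Iic N).finite_subsets).image (· ∪ Ioi N)).subset fun T hT => ?_
  refine ⟨T ∩ Iic N, inter_subset_right, ?_⟩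
  ext n
  rcases le_or_gt n N with hn | hn
  · simp [hn, not_lt.mpr hn]
  · simp [hn, hT hn]

theorem stmt4_general (S : Set ℕ) (d : ℕ)
    (hS : IsNumSgp S) :
    {T | T ∈ Md S d ∧ ∀ T' ∈ Md S d, T ⊆ T' → T' = T}.Finite :=
  (Nat.finite_setOf_Ioi_subset (d * Frob S)).subset fun _ hT =>
    Ioi_mul_frob_subset_of_maximal hS hT.1 hT.2

theorem stmt4 (S : Set ℕ) (d : ℕ) (hd : 0 < d)
    (hS : IsNumSgp S) (hSne : S ≠ Set.univ) :
    {T | T ∈ Md S d ∧ ∀ T' ∈ Md S d, T ⊆ T' → T' = T}.Finite :=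
  stmt4_general S d hS
end

section
/- Let S be an irreducible numerical semigroup and d a positive integer. Then every maximal element T of M_d(S) = {T : T/d = S} (with respect to inclusion) is irreducible. -/
open scoped Pointwise

/-
Taking quotients by `d` commutes with intersections and preserves numerical semigroups. If
`T = A ∩ B` with `T ⊂ A`, `T ⊂ B`, then `S = T/d = A/d ∩ B/d`, and maximality of `T` in `M_d(S)`
forces `A/d ≠ S ≠ B/d`; this decomposes `S` properly, contradicting its irreducibility.
-/

lemma isNumSgp_quot {A : Set ℕ} {d : ℕ} (hA : IsNumSgp A) (hd : 0 < d) :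
    IsNumSgp (quot A d) := by
  obtain ⟨h0, hadd, hfin⟩ := hA
  refine ⟨by simpa [quot] using h0, fun a ha b hb => ?_, ?_⟩
  · simpa [quot, Nat.mul_add] using hadd _ ha _ hb
  · have hcompl : (quot A d)ᶜ = (d * ·) ⁻¹' Aᶜ := rfl
    rw [hcompl]
    exact hfin.preimage (mul_right_injective₀ hd.ne').injOn

lemma quot_mono {A B : Set ℕ} (h : A ⊆ B) (d : ℕ) : quot A d ⊆ quot B d :=
  fun _ hx => h hx

lemma quot_inter (A B : Set ℕ) (d : ℕ) : quot (A ∩ B) d = quot A d ∩ quot B d := rfl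

lemma ssubset_quot_of_maximal_mem_Md {S T C : Set ℕ} {d : ℕ} (hT : T ∈ Md S d)
    (hmax : ∀ T' ∈ Md S d, T ⊆ T' → T' = T) (hC : IsNumSgp C) (hTC : T ⊂ C) :
    S ⊂ quot C d := by
  obtain ⟨-, rfl⟩ := hT
  refine (quot_mono hTC.subset d).ssubset_of_ne fun hq => hTC.ne ?_
  exact (hmax C ⟨hC, hq.symm⟩ hTC.subset).symm

theorem stmt6_general (S : Set ℕ) (d : ℕ) (hd : 0 < d)
    (hirr : Irr S)
    (T : Set ℕ) (hT : T ∈ Md S d)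
    (hmax : ∀ T' ∈ Md S d, T ⊆ T' → T' = T) :
    Irr T := by
  rintro ⟨A, B, hA, hB, hTA, hTB, rfl⟩
  refine hirr ⟨quot A d, quot B d, isNumSgp_quot hA hd, isNumSgp_quot hB hd,
    ssubset_quot_of_maximal_mem_Md hT hmax hA hTA,
    ssubset_quot_of_maximal_mem_Md hT hmax hB hTB, ?_⟩
  rw [← hT.2, quot_inter]

theorem stmt6 (S : Set ℕ) (d : ℕ) (hd : 0 < d)
    (hS : IsNumSgp S) (hSne : S ≠ Set.univ) (hirr : Irr S)
    (T : Set ℕ) (hT : T ∈ Md S d)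
    (hmax : ∀ T' ∈ Md S d, T ⊆ T' → T' = T) :
    Irr T :=
  stmt6_general S d hd hirr T hT hmax
end

section
/- Let S ≠ ℕ be a numerical semigroup, d a positive integer, and T ∈ M_d(S) such that d does not divide F(T). Then max{x ∈ ℕ \ T : T ∪ {x} ∈ M_d(S)} = F(T). -/
open scoped Pointwise

/-! Every candidate `x` lies outside `T`, hence `x ≤ F(T)`. Conversely `F(T)` is a candidate:
`T ∪ {F(T)}` is still a numerical semigroup, because any sum of `F(T)` with a nonzero element
exceeds `F(T)`, and adjoining a non-multiple of `d` does not change `T/d`. -/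

namespace IsNumSgp

variable {T : Set ℕ}

theorem le_frob_of_notMem (hT : IsNumSgp T) {x : ℕ} (hx : x ∉ T) : x ≤ Frob T :=
  le_csSup hT.2.2.bddAbove hx

theorem mem_of_frob_lt_s8 (hT : IsNumSgp T) {x : ℕ} (hx : Frob T < x) : x ∈ T := by
  by_contra h
  exact hx.not_ge (hT.le_frob_of_notMem h)

-- If T = ℕ then `Frob T = sSup ∅ = 0`.
theorem frob_notMem (hT : IsNumSgp T) (hF : Frob T ≠ 0) : Frob T ∉ T := by
  have hne : (Tᶜ : Set ℕ).Nonempty := by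
    by_contra h
    exact hF (by rw [Frob, Set.not_nonempty_iff_eq_empty.mp h, csSup_empty, Nat.bot_eq_zero])
  exact Nat.sSup_mem hne hT.2.2.bddAbove

theorem union_frob (hT : IsNumSgp T) : IsNumSgp (T ∪ {Frob T}) := by
  refine ⟨Or.inl hT.1, ?_, hT.2.2.subset fun x hx h => hx (Or.inl h)⟩
  intro a ha b hb
  rcases eq_or_ne a 0 with rfl | ha0
  · simpa using hb
  rcases eq_or_ne b 0 with rfl | hb0
  · simpa using ha
  rcases ha with ha | rfl <;> rcases hb with hb | rfl
  · exact Or.inl (hT.2.1 a ha b hb)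
  all_goals exact Or.inl (hT.mem_of_frob_lt_s8 (by omega))

end IsNumSgp

theorem quot_union_singleton_of_not_dvd {T : Set ℕ} {d x : ℕ} (h : ¬ d ∣ x) :
    quot (T ∪ {x}) d = quot T d := by
  ext y
  simp only [quot, Set.mem_ofPred_eq, Set.mem_union, Set.mem_singleton_iff, or_iff_left_iff_imp]
  rintro rfl
  exact absurd (dvd_mul_right d y) h

theorem stmt8_general (S : Set ℕ) (d : ℕ)
    (T : Set ℕ) (hT : T ∈ Md S d) (hdvd : ¬ d ∣ Frob T) :
    sSup {x | x ∉ T ∧ T ∪ {x} ∈ Md S d} = Frob T := by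
  obtain ⟨hT, hquot⟩ := hT
  refine IsGreatest.csSup_eq ⟨⟨?_, hT.union_frob, ?_⟩, fun x hx => hT.le_frob_of_notMem hx.1⟩
  · exact hT.frob_notMem fun h => hdvd (h ▸ dvd_zero d)
  · rw [quot_union_singleton_of_not_dvd hdvd, hquot]

theorem stmt8 (S : Set ℕ) (d : ℕ) (hd : 0 < d)
    (hS : IsNumSgp S) (hSne : S ≠ Set.univ)
    (T : Set ℕ) (hT : T ∈ Md S d) (hdvd : ¬ d ∣ Frob T) :
    sSup {x | x ∉ T ∧ T ∪ {x} ∈ Md S d} = Frob T :=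
  stmt8_general S d T hT hdvd
end

section
/- Let S ≠ ℕ be a numerical semigroup and d a positive integer. If M is a submonoid of ℕ that is an intersection of elements of M_d(S), then X = msg(M) \ d·msg(S) satisfies M = ⟨X⟩ + d·S, and X ⊆ Y for every Y ⊆ ℕ with M = ⟨Y⟩ + d·S. -/
open scoped Pointwise

/-!
Every minimal generator of `M` lies either in `d·msg(S) ⊆ d·S` or in `X`, so `⟨X⟩ + d·S`, which
lies inside `M`, contains all of `M`. Conversely, let `x ∈ msg(M) \ d·msg(S)` and
`M = ⟨Y⟩ + d·S`, and write `x = g + d·s` accordingly. Both summands lie in `M`, so one of them is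
`0`. If `g = 0`, then `x = d·s` is a minimal generator of `M ⊇ d·S`, which forces
`s ∈ msg(S)`, which is excluded; hence `x = g ∈ ⟨Y⟩`, and a minimal generator of `M` lying in
`⟨Y⟩ ⊆ M` must belong to `Y`.
-/

def IsNumSgp.toAddSubmonoid {S : Set ℕ} (hS : IsNumSgp S) : AddSubmonoid ℕ where
  carrier := S
  zero_mem' := hS.1
  add_mem' := fun ha hb => hS.2.1 _ ha _ hb

lemma dmul_subset_of_mem_Md {S T : Set ℕ} {d : ℕ} (hT : T ∈ Md S d) : dmul d S ⊆ T := by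
  rintro _ ⟨s, hs, rfl⟩
  rw [← hT.2] at hs
  exact hs

lemma eq_zero_or_eq_zero_of_add_mem_msg {M : Set ℕ} {a b : ℕ} (ha : a ∈ M) (hb : b ∈ M)
    (hab : a + b ∈ msg M) : a = 0 ∨ b = 0 := by
  by_contra! h
  exact hab.2.2 a ha b hb h.1 h.2 rfl

lemma AddSubmonoid.closure_msg (M : AddSubmonoid ℕ) : AddSubmonoid.closure (msg M) = M := by
  refine le_antisymm (AddSubmonoid.closure_le.mpr fun x hx => hx.1) fun m hm => ?_
  induction m using Nat.strong_induction_on with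
  | _ m ih =>
    by_cases hm0 : m = 0
    · exact hm0 ▸ AddSubmonoid.zero_mem _
    by_cases hmsg : m ∈ msg M
    · exact AddSubmonoid.subset_closure hmsg
    obtain ⟨a, ha, b, hb, ha0, hb0, rfl⟩ : ∃ a ∈ M, ∃ b ∈ M, a ≠ 0 ∧ b ≠ 0 ∧ a + b = m := by
      simpa [msg, hm, hm0] using hmsg
    exact AddSubmonoid.add_mem _ (ih a (by omega) ha) (ih b (by omega) hb)

lemma mem_of_mem_msg_of_mem_gen {M Y : Set ℕ} (hYM : gen Y ⊆ M) {x : ℕ} (hxY : x ∈ gen Y)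
    (hxM : x ∈ msg M) : x ∈ Y := by
  induction hxY using AddSubmonoid.closure_induction with
  | mem x hx => exact hx
  | zero => exact absurd rfl hxM.2.1
  | add a b ha hb iha ihb =>
    rcases eq_zero_or_eq_zero_of_add_mem_msg (hYM ha) (hYM hb) hxM with rfl | rfl
    · rw [zero_add] at hxM ⊢
      exact ihb hxM
    · rw [add_zero] at hxM ⊢
      exact iha hxM

lemma mem_msg_of_mul_mem_msg {M S : Set ℕ} {d s : ℕ} (hdS : dmul d S ⊆ M) (hs : s ∈ S)
    (hds : d * s ∈ msg M) : s ∈ msg S := by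
  refine ⟨hs, fun hs0 => hds.2.1 (by rw [hs0, mul_zero]), fun a ha b hb ha0 hb0 hab => ?_⟩
  have hd0 : d ≠ 0 := fun hd0 => hds.2.1 (by rw [hd0, zero_mul])
  rw [← hab, mul_add] at hds
  rcases eq_zero_or_eq_zero_of_add_mem_msg (hdS ⟨a, ha, rfl⟩) (hdS ⟨b, hb, rfl⟩) hds with h | h
  · exact mul_ne_zero hd0 ha0 h
  · exact mul_ne_zero hd0 hb0 h

lemma coe_eq_gen_msg_sdiff_add_dmul {M S : AddSubmonoid ℕ} {d : ℕ} (hdS : dmul d S ⊆ M) :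
    (M : Set ℕ) = gen (msg M \ dmul d (msg S)) + dmul d S := by
  have hdmul : dmul d S = (S.map (AddMonoidHom.mulLeft d) : Set ℕ) :=
    (AddSubmonoid.coe_map (AddMonoidHom.mulLeft d) S).symm
  rw [gen, hdmul, ← AddSubmonoid.coe_sup, SetLike.coe_set_eq]
  refine le_antisymm ?_ ?_
  · conv_lhs => rw [← AddSubmonoid.closure_msg M]
    refine AddSubmonoid.closure_le.mpr fun x hx => ?_
    by_cases hxd : x ∈ dmul d (msg S)
    · obtain ⟨s, hs, rfl⟩ := hxd
      exact AddSubmonoid.mem_sup_right ⟨s, hs.1, rfl⟩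
    · exact AddSubmonoid.mem_sup_left (AddSubmonoid.subset_closure ⟨hx, hxd⟩)
  · refine sup_le (AddSubmonoid.closure_le.mpr fun x hx => hx.1.1) ?_
    rw [← SetLike.coe_subset_coe, ← hdmul]
    exact hdS

lemma msg_sdiff_dmul_subset {M S Y : Set ℕ} {d : ℕ} (hS : 0 ∈ S)
    (hY : M = gen Y + dmul d S) : msg M \ dmul d (msg S) ⊆ Y := by
  have hYM : gen Y ⊆ M := fun g hg =>
    hY ▸ Set.mem_add.mpr ⟨g, hg, 0, ⟨0, hS, mul_zero d⟩, add_zero g⟩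
  have hdS : dmul d S ⊆ M := fun _ hds => hY ▸ ⟨0, AddSubmonoid.zero_mem _, _, hds, zero_add _⟩
  rintro x ⟨hxM, hxd⟩
  obtain ⟨g, hg, _, ⟨s, hs, rfl⟩, rfl⟩ : x ∈ gen Y + dmul d S := hY ▸ hxM.1
  beta_reduce at hxM hxd ⊢
  rcases eq_zero_or_eq_zero_of_add_mem_msg (hYM hg) (hdS ⟨s, hs, rfl⟩) hxM
    with rfl | (hds : d * s = 0)
  · rw [zero_add] at hxM hxd
    exact absurd ⟨s, mem_msg_of_mul_mem_msg hdS hs hxM, rfl⟩ hxd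
  · rw [hds, add_zero] at hxM ⊢
    exact mem_of_mem_msg_of_mem_gen hYM hg hxM

theorem stmt13_general (S : Set ℕ) (d : ℕ)
    (hS : IsNumSgp S) (M : Set ℕ)
    (hM : ∃ 𝒯 : Set (Set ℕ), 𝒯.Nonempty ∧ 𝒯 ⊆ Md S d ∧ M = ⋂₀ 𝒯) :
    M = gen (msg M \ dmul d (msg S)) + dmul d S ∧
      ∀ Y : Set ℕ, M = gen Y + dmul d S → msg M \ dmul d (msg S) ⊆ Y := by
  obtain ⟨𝒯, -, h𝒯, rfl⟩ := hM
  let N : AddSubmonoid ℕ := ⨅ T : 𝒯, (h𝒯 T.2).1.toAddSubmonoid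
  have hN : (N : Set ℕ) = ⋂₀ 𝒯 := by
    rw [AddSubmonoid.coe_iInf, Set.sInter_eq_iInter]
    rfl
  have hdS : dmul d S ⊆ N := hN ▸ Set.subset_sInter fun T hT => dmul_subset_of_mem_Md (h𝒯 hT)
  rw [← hN]
  exact ⟨coe_eq_gen_msg_sdiff_add_dmul (S := hS.toAddSubmonoid) hdS,
    fun Y => msg_sdiff_dmul_subset hS.1⟩

theorem stmt13 (S : Set ℕ) (d : ℕ) (hd : 0 < d)
    (hS : IsNumSgp S) (hSne : S ≠ Set.univ) (M : Set ℕ)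
    (hM : ∃ 𝒯 : Set (Set ℕ), 𝒯.Nonempty ∧ 𝒯 ⊆ Md S d ∧ M = ⋂₀ 𝒯) :
    M = gen (msg M \ dmul d (msg S)) + dmul d S ∧
      ∀ Y : Set ℕ, M = gen Y + dmul d S → msg M \ dmul d (msg S) ⊆ Y :=
  stmt13_general S d hS M hM
end

section
/- Let S be a numerical semigroup, d a positive integer, and x ∈ S with gcd(x,d) = 1 and x ∉ d·S. If T = ⟨x⟩ + d·S, then g(T) = (d−1)(x−1)/2 + d·g(S), where g denotes the genus (number of gaps). -/
/-!
Since `gcd(x, d) = 1`, the numbers `k * x` with `k < d` meet every residue class mod `d` exactly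
once, and as `x ∈ S` every element of `T` is `k * x + d * m` with `k < d`, `m ∈ S`. Hence the
class `k * x % d + d * j` meets `T` exactly for `j ∈ ⌊k x / d⌋ + S`, so it contains
`⌊k x / d⌋ + g(S)` gaps. Summing over `k`, the pairing `k ↔ d - k` gives
`⌊k x / d⌋ + ⌊(d - k) x / d⌋ = x - 1`, whence `∑ ⌊k x / d⌋ = (d - 1)(x - 1) / 2`.
-/

open scoped Pointwise

namespace Nat

open Finset

theorem div_add_div_add_one_eq {a b d q : ℕ} (h : a + b = d * q) (ha : ¬ d ∣ a) :
    a / d + b / d + 1 = q := by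
  have hd : 0 < d := Nat.pos_of_ne_zero fun hd => ha (by simp_all)
  rw [← Nat.add_div_eq_of_le_mod_add_mod (Nat.le_mod_add_mod_of_dvd_add_of_not_dvd
    (h ▸ dvd_mul_right d q) ha) hd, h, Nat.mul_div_cancel_left q hd]

theorem sum_range_mul_div_of_coprime {x d : ℕ} (h : x.Coprime d) :
    ∑ k ∈ range d, k * x / d = (d - 1) * (x - 1) / 2 := by
  obtain _ | n := d
  · simp
  have hpair : ∀ k ∈ range n, (k + 1) * x / (n + 1) + (n - 1 - k + 1) * x / (n + 1) = x - 1 := by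
    intro k hk
    have hk := mem_range.1 hk
    have hndvd : ¬ n + 1 ∣ (k + 1) * x := fun hdvd =>
      absurd (Nat.le_of_dvd k.succ_pos (h.symm.dvd_of_dvd_mul_right hdvd)) (by omega)
    have hsum : (k + 1) * x + (n - 1 - k + 1) * x = (n + 1) * x := by
      rw [← add_mul]; congr 1; omega
    exact Nat.eq_sub_of_add_eq (div_add_div_add_one_eq hsum hndvd)
  have hsum : 2 * ∑ k ∈ range n, (k + 1) * x / (n + 1) = n * (x - 1) := by
    rw [two_mul]
    nth_rw 2 [← sum_range_reflect]
    rw [← sum_add_distrib, sum_congr rfl hpair, sum_const, card_range, smul_eq_mul]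
  rw [sum_range_succ', zero_mul, Nat.zero_div, add_zero, Nat.add_sub_cancel]
  omega

theorem mul_mod_injOn {x d : ℕ} (h : x.Coprime d) :
    Set.InjOn (fun k => k * x % d) (Set.Iio d) :=
  fun k hk k' hk' hkk' => by
    simpa [Nat.ModEq, Nat.mod_eq_of_lt hk, Nat.mod_eq_of_lt hk'] using
      Nat.ModEq.cancel_right_of_coprime (Nat.coprime_comm.1 h) hkk'

theorem exists_lt_mul_mod_eq {x d : ℕ} (h : x.Coprime d) (hd : 0 < d) (n : ℕ) :
    ∃ k < d, k * x % d = n % d := by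
  have := surjOn_of_injOn_of_card_le (s := range d) (t := range d) (fun k => k * x % d)
    (fun k _ => by simpa using Nat.mod_lt _ hd) (by simpa using mul_mod_injOn h) le_rfl
  simpa using this (mem_range.2 (Nat.mod_lt n hd))

end Nat

theorem Set.compl_image_add_right (S : Set ℕ) (q : ℕ) :
    ((· + q) '' S)ᶜ = Set.Iio q ∪ (· + q) '' Sᶜ := by
  ext n
  simp only [mem_compl_iff, mem_image, mem_union, mem_Iio, not_exists, not_and]
  constructor
  · intro hn
    refine (lt_or_ge n q).imp id fun hqn => ⟨n - q, fun hS => hn _ hS (by omega), by omega⟩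
  · rintro (hn | ⟨m, hm, rfl⟩) m' hm' heq
    · omega
    · exact hm (add_right_cancel heq ▸ hm')

theorem Set.ncard_compl_image_add_right {S : Set ℕ} (hS : Sᶜ.Finite) (q : ℕ) :
    ((· + q) '' S)ᶜ.ncard = q + Sᶜ.ncard := by
  rw [compl_image_add_right, ncard_union_eq ?_ (finite_Iio q) (hS.image _), ncard_Iio_nat,
    ncard_image_of_injective _ (add_left_injective q)]
  exact disjoint_left.2 fun n hn ⟨m, _, hmn⟩ => (mem_Iio.1 hn).not_ge (hmn ▸ Nat.le_add_left q m)

section Gluing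

variable {S : Set ℕ} {x d : ℕ}

theorem add_mul_mem_of_add_mem (hadd : ∀ a ∈ S, ∀ b ∈ S, a + b ∈ S) (hx : x ∈ S) {m : ℕ}
    (hm : m ∈ S) (q : ℕ) : m + q * x ∈ S := by
  induction q with
  | zero => simpa using hm
  | succ q ih => simpa [add_mul, ← add_assoc] using hadd _ ih _ hx

theorem mem_gen_singleton_add_dmul_iff (hd : 0 < d) (hadd : ∀ a ∈ S, ∀ b ∈ S, a + b ∈ S)
    (hx : x ∈ S) {n : ℕ} : n ∈ gen {x} + dmul d S ↔ ∃ k < d, ∃ m ∈ S, n = k * x + d * m := by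
  constructor
  · rintro ⟨_, hk, _, ⟨m, hm, rfl⟩, rfl⟩
    obtain ⟨k, rfl⟩ := AddSubmonoid.mem_closure_singleton.1 hk
    refine ⟨k % d, Nat.mod_lt k hd, m + k / d * x, add_mul_mem_of_add_mem hadd hx hm _, ?_⟩
    calc k • x + d * m = (k % d + d * (k / d)) * x + d * m := by rw [Nat.mod_add_div, smul_eq_mul]
      _ = k % d * x + d * (m + k / d * x) := by ring
  · rintro ⟨k, -, m, hm, rfl⟩
    exact Set.add_mem_add (AddSubmonoid.mem_closure_singleton.2 ⟨k, smul_eq_mul k x⟩) ⟨m, hm, rfl⟩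

theorem mul_mod_add_mul_mem_gen_singleton_add_dmul_iff (hcop : x.Coprime d)
    (hadd : ∀ a ∈ S, ∀ b ∈ S, a + b ∈ S) (hx : x ∈ S) {k j : ℕ} (hk : k < d) :
    k * x % d + d * j ∈ gen {x} + dmul d S ↔ j ∈ (· + k * x / d) '' S := by
  have hd : 0 < d := by omega
  have hkx := Nat.mod_add_div (k * x) d
  rw [mem_gen_singleton_add_dmul_iff hd hadd hx]
  constructor
  · rintro ⟨k', hk', m, hm, h⟩
    obtain rfl : k = k' := Nat.mul_mod_injOn hcop hk hk' <| by
      simpa [Nat.add_mul_mod_self_left] using congrArg (· % d) h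
    refine ⟨m, hm, Nat.eq_of_mul_eq_mul_left hd ?_⟩
    linarith
  · rintro ⟨m, hm, rfl⟩
    exact ⟨k, hk, m, hm, by linarith⟩

theorem ncard_compl_gen_singleton_add_dmul (hcop : x.Coprime d) (hd : 0 < d)
    (hadd : ∀ a ∈ S, ∀ b ∈ S, a + b ∈ S) (hx : x ∈ S) (hfin : Sᶜ.Finite) :
    (gen {x} + dmul d S)ᶜ.ncard = ∑ k ∈ Finset.range d, ((· + k * x / d) '' S)ᶜ.ncard := by
  have (k : Fin d) : Finite ↥((· + k * x / d) '' S)ᶜ := by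
    rw [Set.compl_image_add_right]
    exact ((Set.finite_Iio _).union (hfin.image _)).to_subtype
  let e (p : Σ k : Fin d, ↥((· + k * x / d) '' S)ᶜ) : ↥(gen {x} + dmul d S)ᶜ :=
    ⟨p.1 * x % d + d * p.2,
      (mul_mod_add_mul_mem_gen_singleton_add_dmul_iff hcop hadd hx p.1.2).not.2 p.2.2⟩
  have he : Function.Bijective e := by
    constructor
    · rintro ⟨k, j, _⟩ ⟨k', j', _⟩ hkj
      have h : k * x % d + d * j = k' * x % d + d * j' := congrArg Subtype.val hkj
      obtain rfl : k = k' := Fin.ext <| Nat.mul_mod_injOn hcop k.2 k'.2 <| by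
        simpa [Nat.add_mul_mod_self_left] using congrArg (· % d) h
      exact Sigma.subtype_ext rfl (Nat.eq_of_mul_eq_mul_left hd (Nat.add_left_cancel h))
    · rintro ⟨n, hn⟩
      obtain ⟨k, hk, hkn⟩ := Nat.exists_lt_mul_mod_eq hcop hd n
      have hn' : k * x % d + d * (n / d) = n := by rw [hkn, Nat.mod_add_div]
      refine ⟨⟨⟨k, hk⟩, n / d, ?_⟩, Subtype.ext hn'⟩
      exact (mul_mod_add_mul_mem_gen_singleton_add_dmul_iff hcop hadd hx hk).not.1 (by rwa [hn'])
  rw [← Nat.card_coe_set_eq, ← Nat.card_congr (Equiv.ofBijective e he), Nat.card_sigma,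
    ← Fin.sum_univ_eq_sum_range (fun k => ((· + k * x / d) '' S)ᶜ.ncard)]
  rfl

end Gluing

theorem stmt15_general (S : Set ℕ) (d x : ℕ) (hd : 0 < d)
    (hS : IsNumSgp S)
    (hx : x ∈ S) (hg : Nat.gcd x d = 1)
    (T : Set ℕ) (hT : T = gen {x} + dmul d S) :
    (Tᶜ : Set ℕ).ncard = (d - 1) * (x - 1) / 2 + d * (Sᶜ : Set ℕ).ncard := by
  obtain ⟨-, hadd, hfin⟩ := hS
  rw [hT, ncard_compl_gen_singleton_add_dmul hg hd hadd hx hfin,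
    Finset.sum_congr rfl fun k _ => Set.ncard_compl_image_add_right hfin _, Finset.sum_add_distrib,
    Nat.sum_range_mul_div_of_coprime hg, Finset.sum_const, Finset.card_range, smul_eq_mul]

theorem stmt15 (S : Set ℕ) (d x : ℕ) (hd : 0 < d)
    (hS : IsNumSgp S)
    (hx : x ∈ S) (hg : Nat.gcd x d = 1) (hxd : x ∉ dmul d S)
    (T : Set ℕ) (hT : T = gen {x} + dmul d S) :
    (Tᶜ : Set ℕ).ncard = (d - 1) * (x - 1) / 2 + d * (Sᶜ : Set ℕ).ncard :=
  stmt15_general S d x hd hS hx hg T hT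
end

section
/- Let S ≠ ℕ be a numerical semigroup, d a positive integer, and x ∈ S with gcd(x,d) = 1 and x ∉ d·S. If T = ⟨x⟩ + d·S, then S is symmetric if and only if T is symmetric. -/
open scoped Pointwise

/-!
Since `gcd(x, d) = 1`, every integer is uniquely `k * x + d * c` with `0 ≤ k < d`, and it lies
in `T = ⟨x⟩ + d·S` exactly when `c ∈ S`. Hence `F(T) = (d - 1) * x + d * F(S)`, and
`F(T) - (k * x + d * c) = (d - 1 - k) * x + d * (F(S) - c)`, so the symmetry condition for `T`
at `k * x + d * c` is the symmetry condition for `S` at `c`.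
-/
theorem exists_eq_natCast_mul_add_mul {d x : ℕ} (hd : 0 < d) (hxd : x.Coprime d) (z : ℤ) :
    ∃ k < d, ∃ c : ℤ, z = k * x + d * c := by
  have : NeZero d := ⟨hd.ne'⟩
  have hunit : IsUnit (x : ZMod d) := (ZMod.isUnit_iff_coprime x d).mpr hxd
  set k := ((z : ZMod d) * (x : ZMod d)⁻¹).val
  have hkx : ((k * x : ℤ) : ZMod d) = z := by
    push_cast
    rw [ZMod.natCast_zmod_val, mul_assoc, ZMod.inv_mul_of_unit _ hunit, mul_one]
  obtain ⟨c, hc⟩ := (ZMod.intCast_eq_intCast_iff_dvd_sub _ _ _).mp hkx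
  exact ⟨k, ZMod.val_lt _, c, by linarith⟩

theorem natCast_mul_add_mul_injective {d x : ℕ} (hxd : x.Coprime d) {k k' : ℕ}
    (hk : k < d) (hk' : k' < d) {c c' : ℤ} (h : (k : ℤ) * x + d * c = k' * x + d * c') :
    k = k' ∧ c = c' := by
  have hdvd : (d : ℤ) ∣ ((k : ℤ) - k') * x := ⟨c' - c, by linarith⟩
  have hkk : (k : ℤ) - k' = 0 :=
    Int.eq_zero_of_abs_lt_dvd ((Nat.isCoprime_iff_coprime.mpr hxd.symm).dvd_of_dvd_mul_right hdvd)
      (abs_sub_lt_iff.mpr ⟨by omega, by omega⟩)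
  have hkk' : k = k' := by omega
  subst hkk'
  exact ⟨rfl, mul_left_cancel₀ (by omega) (add_left_cancel h)⟩

theorem IsNumSgp.nsmul_mem {S : Set ℕ} (hS : IsNumSgp S) {x : ℕ} (hx : x ∈ S) (n : ℕ) :
    n * x ∈ S := by
  induction n with
  | zero => simpa using hS.1
  | succ n ih => simpa [Nat.succ_mul] using hS.2.1 _ ih _ hx

theorem natCast_mem_natSet {S : Set ℕ} {n : ℕ} : (n : ℤ) ∈ NatSet S ↔ n ∈ S :=
  ⟨fun ⟨_, hm, hmn⟩ => Int.ofNat_inj.mp hmn ▸ hm, fun hn => ⟨n, hn, rfl⟩⟩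

theorem Frob_notMem {S : Set ℕ} (hfin : Sᶜ.Finite) (hS : S ≠ Set.univ) : Frob S ∉ S :=
  Nat.sSup_mem (Set.nonempty_compl.mpr hS) hfin.bddAbove

theorem mem_of_Frob_lt {S : Set ℕ} (hfin : Sᶜ.Finite) {n : ℕ} (hn : Frob S < n) : n ∈ S :=
  by_contra fun h => (le_csSup hfin.bddAbove h).not_gt hn

theorem mem_natSet_of_Frob_lt {S : Set ℕ} (hfin : Sᶜ.Finite) {z : ℤ} (hz : (Frob S : ℤ) < z) :
    z ∈ NatSet S := by
  lift z to ℕ using by omega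
  exact natCast_mem_natSet.mpr (mem_of_Frob_lt hfin (by exact_mod_cast hz))

theorem Frob_eq_of_notMem {S : Set ℕ} {f : ℕ} (hf : f ∉ S) (h : ∀ n, f < n → n ∈ S) :
    Frob S = f :=
  le_antisymm (csSup_le ⟨f, hf⟩ fun n hn => not_lt.mp fun hlt => hn (h n hlt))
    (le_csSup ⟨f, fun n hn => not_lt.mp fun hlt => hn (h n hlt)⟩ hf)

theorem mem_gen_add_dmul {S : Set ℕ} (hS : IsNumSgp S) {d x : ℕ} (hd : 0 < d) (hx : x ∈ S)
    {n : ℕ} : n ∈ gen {x} + dmul d S ↔ ∃ k < d, ∃ m ∈ S, n = k * x + d * m := by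
  constructor
  · rintro ⟨_, hj, _, ⟨s, hs, rfl⟩, rfl⟩
    obtain ⟨j, rfl⟩ := AddSubmonoid.mem_closure_singleton.mp hj
    refine ⟨j % d, Nat.mod_lt _ hd, s + j / d * x, hS.2.1 _ hs _ (hS.nsmul_mem hx _), ?_⟩
    conv_lhs => rw [smul_eq_mul, ← Nat.mod_add_div j d]
    ring
  · rintro ⟨k, -, m, hm, rfl⟩
    exact ⟨k * x, AddSubmonoid.mem_closure_singleton.mpr ⟨k, rfl⟩, d * m, ⟨m, hm, rfl⟩, rfl⟩

theorem mem_natSet_gen_add_dmul_iff {S : Set ℕ} (hS : IsNumSgp S) {d x : ℕ} (hx : x ∈ S)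
    (hxd : x.Coprime d) {k : ℕ} (hk : k < d) (c : ℤ) :
    (k : ℤ) * x + d * c ∈ NatSet (gen {x} + dmul d S) ↔ c ∈ NatSet S := by
  constructor
  · rintro ⟨n, hn, hnc⟩
    obtain ⟨k', hk', m, hm, rfl⟩ := (mem_gen_add_dmul hS (by omega) hx).mp hn
    push_cast at hnc
    obtain ⟨-, rfl⟩ := natCast_mul_add_mul_injective hxd hk' hk hnc
    exact natCast_mem_natSet.mpr hm
  · rintro ⟨m, hm, rfl⟩
    exact ⟨k * x + d * m, (mem_gen_add_dmul hS (by omega) hx).mpr ⟨k, hk, m, hm, rfl⟩,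
      by push_cast; ring⟩

theorem Frob_gen_add_dmul {S : Set ℕ} (hS : IsNumSgp S) (hSne : S ≠ Set.univ) {d x : ℕ}
    (hd : 0 < d) (hx : x ∈ S) (hxd : x.Coprime d) :
    Frob (gen {x} + dmul d S) = (d - 1) * x + d * Frob S := by
  set T := gen {x} + dmul d S
  refine Frob_eq_of_notMem (fun h => Frob_notMem hS.2.2 hSne ?_) fun n hn => ?_
  · have hT : ((d - 1 : ℕ) : ℤ) * x + d * (Frob S : ℤ) ∈ NatSet T := by
      convert natCast_mem_natSet.mpr h using 1
      push_cast
      ring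
    exact natCast_mem_natSet.mp ((mem_natSet_gen_add_dmul_iff hS hx hxd (by omega) _).mp hT)
  · obtain ⟨k, hk, c, hnc⟩ := exists_eq_natCast_mul_add_mul hd hxd n
    refine natCast_mem_natSet.mp
      (hnc ▸ (mem_natSet_gen_add_dmul_iff hS hx hxd hk c).mpr (mem_natSet_of_Frob_lt hS.2.2 ?_))
    have hkx : (k : ℤ) * x ≤ ((d - 1 : ℕ) : ℤ) * x := by gcongr; omega
    have hn' : (((d - 1) * x + d * Frob S : ℕ) : ℤ) < n := by exact_mod_cast hn
    push_cast at hn' hkx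
    exact lt_of_mul_lt_mul_left (a := (d : ℤ)) (by linarith) (by positivity)

theorem stmt17_general (S : Set ℕ) (d x : ℕ) (hd : 0 < d)
    (hS : IsNumSgp S) (hSne : S ≠ Set.univ)
    (hx : x ∈ S) (hg : Nat.gcd x d = 1)
    (T : Set ℕ) (hT : T = gen {x} + dmul d S) :
    SymNS S ↔ SymNS T := by
  subst hT
  have hmem := @mem_natSet_gen_add_dmul_iff S hS d x hx hg
  have hFT : (Frob (gen {x} + dmul d S) : ℤ) = ((d - 1 : ℕ) : ℤ) * x + d * Frob S := by
    rw [Frob_gen_add_dmul hS hSne hd hx hg]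
    push_cast
    ring
  constructor
  · intro hsym z hz
    obtain ⟨k, hk, c, rfl⟩ := exists_eq_natCast_mul_add_mul hd hg z
    have hdual : (Frob (gen {x} + dmul d S) : ℤ) - (k * x + d * c) =
        ((d - 1 - k : ℕ) : ℤ) * x + d * (Frob S - c) := by
      rw [hFT, Nat.cast_sub (by omega : k ≤ d - 1)]
      ring
    rw [hdual, hmem (by omega)]
    exact hsym c (mt (hmem hk c).mpr hz)
  · intro hsym w hw
    have hdual : (Frob (gen {x} + dmul d S) : ℤ) - (((0 : ℕ) : ℤ) * x + d * w) =
        ((d - 1 : ℕ) : ℤ) * x + d * (Frob S - w) := by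
      rw [hFT]
      ring
    have hdualMem := hsym _ (mt (hmem hd w).mp hw)
    rwa [hdual, hmem (by omega)] at hdualMem

theorem stmt17 (S : Set ℕ) (d x : ℕ) (hd : 0 < d)
    (hS : IsNumSgp S) (hSne : S ≠ Set.univ)
    (hx : x ∈ S) (hg : Nat.gcd x d = 1) (hxd : x ∉ dmul d S)
    (T : Set ℕ) (hT : T = gen {x} + dmul d S) :
    SymNS S ↔ SymNS T :=
  stmt17_general S d x hd hS hSne hx hg T hT
end
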